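/- Let T > 0 and μ > 0. Let z₀ ∈ C([0,T];ℝ), let a : D₁ → ℝ be continuous on D₁ = {(t,s) : 0 ≤ s ≤ t ≤ T} and b : D₂ → ℝ continuous on D₂ = {(t,s,σ) : 0 ≤ s ≤ t, 0 ≤ σ ≤ t, t ≤ T}, with ā := max_{D₁}|a| and b̄ := max_{D₂}|b|. Define the operator S on C([0,T];ℝ) by (Sz)(t) := z₀(t) + ∫₀ᵗ a(t,s)z(s) ds + (1/2)∫₀ᵗ∫₀ᵗ b(t,s,σ)z(s)z(σ) ds dσ, and the weighted norm ‖z‖_μ := max_{0≤t≤T} e^{−μt}|z(t)|. Then for every z ∈ C([0,T];ℝ), ‖Sz‖_μ ≤ ‖z₀‖_μ + ā·(1 − e^{−μT})/μ · ‖z‖_μ + b̄·(cosh(μT) − 1)/μ² · ‖z‖_μ². -/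

import Mathlib

/-!
Bounding `|z s| ≤ e^{μs} ‖z‖_μ` inside the integrals reduces every term of `Sz` to
`E(t) = ∫₀ᵗ e^{μs} ds = (e^{μt} − 1)/μ`: the linear term is at most `ā ‖z‖_μ E(t)` and the
quadratic one at most `(b̄/2) ‖z‖_μ² E(t)²`. After multiplying by `e^{−μt}` these become
`ā ‖z‖_μ (1 − e^{−μt})/μ` and `b̄ ‖z‖_μ² (cosh(μt) − 1)/μ²`, both nondecreasing in `t`, so taking
`t = T` gives the estimate.
-/

open MeasureTheory Set

/-- The weighted norm `‖z‖_μ = max_{0 ≤ t ≤ T} e^{−μt}|z(t)|` on `C([0,T];ℝ)`. -/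
noncomputable def wnorm (μ T : ℝ) (z : ℝ → ℝ) : ℝ :=
  sSup ((fun t => Real.exp (-(μ * t)) * |z t|) '' Icc 0 T)

/-- The operator `S` representing the right-hand side of the scalar Riccati–Volterra
equation: `(Sz)(t) = z₀(t) + ∫₀ᵗ a(t,s)z(s)ds + (1/2)∫₀ᵗ∫₀ᵗ b(t,s,σ)z(s)z(σ)ds dσ`. -/
noncomputable def riccOp (z₀ : ℝ → ℝ) (a : ℝ → ℝ → ℝ) (b : ℝ → ℝ → ℝ → ℝ)
    (z : ℝ → ℝ) : ℝ → ℝ :=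
  fun t => z₀ t + (∫ s in (0:ℝ)..t, a t s * z s) +
    (1/2) * ∫ s in (0:ℝ)..t, ∫ σ in (0:ℝ)..t, b t s σ * z s * z σ

section WeightedNorm

variable {μ T : ℝ} {z : ℝ → ℝ}

lemma wnorm_nonneg : 0 ≤ wnorm μ T z :=
  Real.sSup_nonneg fun _ ⟨_, _, hx⟩ => hx ▸ by positivity

lemma bddAbove_wnorm_image (hz : ContinuousOn z (Icc 0 T)) :
    BddAbove ((fun t => Real.exp (-(μ * t)) * |z t|) '' Icc 0 T) :=
  (isCompact_Icc.image_of_continuousOn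
    ((by fun_prop : Continuous fun t => Real.exp (-(μ * t))).continuousOn.mul hz.abs)).bddAbove

lemma exp_neg_mul_abs_le_wnorm (hz : ContinuousOn z (Icc 0 T)) {t : ℝ} (ht : t ∈ Icc 0 T) :
    Real.exp (-(μ * t)) * |z t| ≤ wnorm μ T z :=
  le_csSup (bddAbove_wnorm_image hz) ⟨t, ht, rfl⟩

lemma abs_le_exp_mul_wnorm (hz : ContinuousOn z (Icc 0 T)) {t : ℝ} (ht : t ∈ Icc 0 T) :
    |z t| ≤ Real.exp (μ * t) * wnorm μ T z := by
  have h := exp_neg_mul_abs_le_wnorm (μ := μ) hz ht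
  rwa [Real.exp_neg, inv_mul_le_iff₀ (Real.exp_pos _)] at h

lemma wnorm_le_of_forall_le (hT : 0 ≤ T) {C : ℝ}
    (h : ∀ t ∈ Icc 0 T, Real.exp (-(μ * t)) * |z t| ≤ C) : wnorm μ T z ≤ C :=
  csSup_le ((nonempty_Icc.2 hT).image _) (forall_mem_image.2 h)

end WeightedNorm

lemma nonneg_of_isGreatest_abs_image {α : Type*} {f : α → ℝ} {s : Set α} {m : ℝ}
    (h : IsGreatest ((fun x => |f x|) '' s) m) : 0 ≤ m := by
  obtain ⟨x, -, hx⟩ := h.1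
  exact hx ▸ abs_nonneg _

lemma exp_neg_mul_exp_sub_one_div (x c : ℝ) :
    Real.exp (-x) * ((Real.exp x - 1) / c) = (1 - Real.exp (-x)) / c := by
  rw [mul_div_assoc', mul_sub, mul_one, ← Real.exp_add, neg_add_cancel, Real.exp_zero]

lemma exp_neg_mul_sq_exp_sub_one_div (x c : ℝ) :
    Real.exp (-x) * ((Real.exp x - 1) / c) ^ 2 / 2 = (Real.cosh x - 1) / c ^ 2 := by
  have hx : Real.exp x * Real.exp (-x) = 1 := by
    rw [← Real.exp_add, add_neg_cancel, Real.exp_zero]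
  have hsq : Real.exp (-x) * (Real.exp x - 1) ^ 2 / 2 = Real.cosh x - 1 := by
    rw [Real.cosh_eq]
    linear_combination (Real.exp x - 2) / 2 * hx
  rw [div_pow, ← hsq]
  ring

section ExponentialBounds

variable {μ t : ℝ}

lemma integral_exp_mul (hμ : μ ≠ 0) :
    ∫ s in (0:ℝ)..t, Real.exp (μ * s) = (Real.exp (μ * t) - 1) / μ := by
  rw [intervalIntegral.integral_comp_mul_left Real.exp hμ, integral_exp, mul_zero,
    Real.exp_zero, smul_eq_mul, inv_mul_eq_div]

lemma abs_integral_le_of_abs_le_mul_exp (hμ : μ ≠ 0) (ht : 0 ≤ t) {f : ℝ → ℝ} {C : ℝ}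
    (hf : ∀ s ∈ Ioc 0 t, |f s| ≤ C * Real.exp (μ * s)) :
    |∫ s in (0:ℝ)..t, f s| ≤ C * ((Real.exp (μ * t) - 1) / μ) := by
  rw [← integral_exp_mul hμ, ← intervalIntegral.integral_const_mul, ← Real.norm_eq_abs]
  exact intervalIntegral.norm_integral_le_of_norm_le ht (ae_of_all _ hf)
    (Continuous.intervalIntegrable (by fun_prop) _ _)

variable {z : ℝ → ℝ} {N : ℝ}

lemma abs_integral_mul_le (hμ : μ ≠ 0) (ht : 0 ≤ t) {k : ℝ → ℝ} {A : ℝ}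
    (hk : ∀ s ∈ Ioc 0 t, |k s| ≤ A) (hz : ∀ s ∈ Ioc 0 t, |z s| ≤ Real.exp (μ * s) * N) :
    |∫ s in (0:ℝ)..t, k s * z s| ≤ A * N * ((Real.exp (μ * t) - 1) / μ) := by
  refine abs_integral_le_of_abs_le_mul_exp hμ ht fun s hs => ?_
  calc |k s * z s| = |k s| * |z s| := abs_mul _ _
    _ ≤ A * (Real.exp (μ * s) * N) :=
        mul_le_mul (hk s hs) (hz s hs) (abs_nonneg _) ((abs_nonneg _).trans (hk s hs))
    _ = A * N * Real.exp (μ * s) := by ring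

lemma abs_integral_integral_mul_mul_le (hμ : μ ≠ 0) (ht : 0 ≤ t) {k : ℝ → ℝ → ℝ} {B : ℝ}
    (hk : ∀ s ∈ Ioc 0 t, ∀ σ ∈ Ioc 0 t, |k s σ| ≤ B)
    (hz : ∀ s ∈ Ioc 0 t, |z s| ≤ Real.exp (μ * s) * N) :
    |∫ s in (0:ℝ)..t, ∫ σ in (0:ℝ)..t, k s σ * z s * z σ| ≤
      B * N ^ 2 * ((Real.exp (μ * t) - 1) / μ) ^ 2 := by
  have hinner : ∀ s ∈ Ioc 0 t, |∫ σ in (0:ℝ)..t, k s σ * z s * z σ| ≤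
      B * N ^ 2 * ((Real.exp (μ * t) - 1) / μ) * Real.exp (μ * s) := fun s hs => by
    have hks : ∀ σ ∈ Ioc 0 t, |k s σ * z s| ≤ B * (Real.exp (μ * s) * N) := fun σ hσ => by
      rw [abs_mul]
      exact mul_le_mul (hk s hs σ hσ) (hz s hs) (abs_nonneg _)
        ((abs_nonneg _).trans (hk s hs σ hσ))
    convert abs_integral_mul_le hμ ht hks hz using 1
    ring
  convert abs_integral_le_of_abs_le_mul_exp hμ ht hinner using 1
  ring

lemma abs_riccOp_le (hμ : μ ≠ 0) (ht : 0 ≤ t) {z₀ : ℝ → ℝ} {a : ℝ → ℝ → ℝ}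
    {b : ℝ → ℝ → ℝ → ℝ} {A B : ℝ} (ha : ∀ s ∈ Ioc 0 t, |a t s| ≤ A)
    (hb : ∀ s ∈ Ioc 0 t, ∀ σ ∈ Ioc 0 t, |b t s σ| ≤ B)
    (hz : ∀ s ∈ Ioc 0 t, |z s| ≤ Real.exp (μ * s) * N) :
    |riccOp z₀ a b z t| ≤ |z₀ t| + A * N * ((Real.exp (μ * t) - 1) / μ) +
      1 / 2 * (B * N ^ 2 * ((Real.exp (μ * t) - 1) / μ) ^ 2) := by
  have hlin := abs_integral_mul_le hμ ht ha hz
  have hquad := abs_integral_integral_mul_mul_le hμ ht hb hz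
  calc |riccOp z₀ a b z t| ≤ |z₀ t| + |∫ s in (0:ℝ)..t, a t s * z s| +
        1 / 2 * |∫ s in (0:ℝ)..t, ∫ σ in (0:ℝ)..t, b t s σ * z s * z σ| := by
        refine (abs_add_le _ _).trans (add_le_add (abs_add_le _ _) ?_)
        rw [abs_mul, abs_of_pos one_half_pos]
    _ ≤ _ := by gcongr

lemma exp_neg_mul_abs_riccOp_le (hμ : μ ≠ 0) (ht : 0 ≤ t) {z₀ : ℝ → ℝ} {a : ℝ → ℝ → ℝ}
    {b : ℝ → ℝ → ℝ → ℝ} {A B : ℝ} (ha : ∀ s ∈ Ioc 0 t, |a t s| ≤ A)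
    (hb : ∀ s ∈ Ioc 0 t, ∀ σ ∈ Ioc 0 t, |b t s σ| ≤ B)
    (hz : ∀ s ∈ Ioc 0 t, |z s| ≤ Real.exp (μ * s) * N) :
    Real.exp (-(μ * t)) * |riccOp z₀ a b z t| ≤ Real.exp (-(μ * t)) * |z₀ t| +
      A * ((1 - Real.exp (-(μ * t))) / μ) * N +
        B * ((Real.cosh (μ * t) - 1) / μ ^ 2) * N ^ 2 := by
  calc Real.exp (-(μ * t)) * |riccOp z₀ a b z t|
      ≤ Real.exp (-(μ * t)) * (|z₀ t| + A * N * ((Real.exp (μ * t) - 1) / μ) +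
          1 / 2 * (B * N ^ 2 * ((Real.exp (μ * t) - 1) / μ) ^ 2)) :=
        mul_le_mul_of_nonneg_left (abs_riccOp_le hμ ht ha hb hz) (Real.exp_pos _).le
    _ = _ := by
        rw [← exp_neg_mul_exp_sub_one_div, ← exp_neg_mul_sq_exp_sub_one_div]
        ring

end ExponentialBounds

theorem riccati_volterra_operator_estimate_general
    (T μ : ℝ) (hT : 0 < T) (hμ : 0 < μ)
    (z₀ : ℝ → ℝ) (hz₀ : ContinuousOn z₀ (Icc 0 T))
    (a : ℝ → ℝ → ℝ)
    (b : ℝ → ℝ → ℝ → ℝ)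
    (abar : ℝ)
    (habar : IsGreatest ((fun p : ℝ × ℝ => |a p.1 p.2|) ''
      {p : ℝ × ℝ | 0 ≤ p.2 ∧ p.2 ≤ p.1 ∧ p.1 ≤ T}) abar)
    (bbar : ℝ)
    (hbbar : IsGreatest ((fun p : ℝ × ℝ × ℝ => |b p.1 p.2.1 p.2.2|) ''
      {p : ℝ × ℝ × ℝ | 0 ≤ p.2.1 ∧ p.2.1 ≤ p.1 ∧ 0 ≤ p.2.2 ∧ p.2.2 ≤ p.1 ∧ p.1 ≤ T}) bbar)
    (z : ℝ → ℝ) (hz : ContinuousOn z (Icc 0 T)) :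
    wnorm μ T (riccOp z₀ a b z) ≤
      wnorm μ T z₀ + abar * ((1 - Real.exp (-(μ * T))) / μ) * wnorm μ T z +
        bbar * ((Real.cosh (μ * T) - 1) / μ ^ 2) * (wnorm μ T z) ^ 2 := by
  have habar₀ := nonneg_of_isGreatest_abs_image habar
  have hbbar₀ := nonneg_of_isGreatest_abs_image hbbar
  refine wnorm_le_of_forall_le hT.le fun t ht => ?_
  have hμt : μ * t ≤ μ * T := mul_le_mul_of_nonneg_left ht.2 hμ.le
  have hcosh : Real.cosh (μ * t) ≤ Real.cosh (μ * T) := by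
    rwa [Real.cosh_le_cosh, abs_of_nonneg (mul_nonneg hμ.le ht.1),
      abs_of_nonneg (mul_nonneg hμ.le hT.le)]
  calc Real.exp (-(μ * t)) * |riccOp z₀ a b z t|
      ≤ Real.exp (-(μ * t)) * |z₀ t| + abar * ((1 - Real.exp (-(μ * t))) / μ) * wnorm μ T z +
          bbar * ((Real.cosh (μ * t) - 1) / μ ^ 2) * wnorm μ T z ^ 2 :=
        exp_neg_mul_abs_riccOp_le hμ.ne' ht.1
          (fun s hs => habar.2 ⟨(t, s), ⟨hs.1.le, hs.2, ht.2⟩, rfl⟩)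
          (fun s hs σ hσ => hbbar.2 ⟨(t, s, σ), ⟨hs.1.le, hs.2, hσ.1.le, hσ.2, ht.2⟩, rfl⟩)
          (fun s hs => abs_le_exp_mul_wnorm hz ⟨hs.1.le, hs.2.trans ht.2⟩)
    _ ≤ _ := by
        have hN : 0 ≤ wnorm μ T z := wnorm_nonneg
        gcongr
        exact exp_neg_mul_abs_le_wnorm hz₀ ht

/-- The fundamental estimate (6.7):
`‖Sz‖_μ ≤ ‖z₀‖_μ + ā(1−e^{−μT})/μ ‖z‖_μ + b̄(cosh(μT)−1)/μ² ‖z‖_μ²`. -/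
theorem riccati_volterra_operator_estimate
    (T μ : ℝ) (hT : 0 < T) (hμ : 0 < μ)
    (z₀ : ℝ → ℝ) (hz₀ : ContinuousOn z₀ (Icc 0 T))
    (a : ℝ → ℝ → ℝ)
    (hacont : ContinuousOn (fun p : ℝ × ℝ => a p.1 p.2)
      {p : ℝ × ℝ | 0 ≤ p.2 ∧ p.2 ≤ p.1 ∧ p.1 ≤ T})
    (b : ℝ → ℝ → ℝ → ℝ)
    (hbcont : ContinuousOn (fun p : ℝ × ℝ × ℝ => b p.1 p.2.1 p.2.2)
      {p : ℝ × ℝ × ℝ | 0 ≤ p.2.1 ∧ p.2.1 ≤ p.1 ∧ 0 ≤ p.2.2 ∧ p.2.2 ≤ p.1 ∧ p.1 ≤ T})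
    (abar : ℝ)
    (habar : IsGreatest ((fun p : ℝ × ℝ => |a p.1 p.2|) ''
      {p : ℝ × ℝ | 0 ≤ p.2 ∧ p.2 ≤ p.1 ∧ p.1 ≤ T}) abar)
    (bbar : ℝ)
    (hbbar : IsGreatest ((fun p : ℝ × ℝ × ℝ => |b p.1 p.2.1 p.2.2|) ''
      {p : ℝ × ℝ × ℝ | 0 ≤ p.2.1 ∧ p.2.1 ≤ p.1 ∧ 0 ≤ p.2.2 ∧ p.2.2 ≤ p.1 ∧ p.1 ≤ T}) bbar)
    (z : ℝ → ℝ) (hz : ContinuousOn z (Icc 0 T)) :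
    wnorm μ T (riccOp z₀ a b z) ≤
      wnorm μ T z₀ + abar * ((1 - Real.exp (-(μ * T))) / μ) * wnorm μ T z +
        bbar * ((Real.cosh (μ * T) - 1) / μ ^ 2) * (wnorm μ T z) ^ 2 :=
  riccati_volterra_operator_estimate_general T μ hT hμ z₀ hz₀ a b abar habar bbar hbbar z hz
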